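/- arXiv:1702.00753 — 2 statements merged into one kernel-verified Lean document; each statement's English description precedes it below -/
import Mathlib

section
/- Let Ω be a finite set with full-support probability measure μ, and assume the product semigroup (P_t) on Ωⁿ is hypercontractive with constant ρ > 0. Let f : Ωⁿ → ℝ satisfy max_{1≤i≤n} ‖L_i f‖_∞ ≤ 1, let η > 0, t > 0, and let T ⊆ {1,…,n} be such that I_i(f) ≤ η for every i ∈ T. Then ‖P_t f − Π_T P_t f‖²_{L²(μ^{⊗n})} ≤ I(f) · η^{(1−e^{−2ρt})/(1+e^{−2ρt})}. -/
open Finset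

variable {Ω : Type} [Fintype Ω] {n : ℕ}

/-- The product weight of the product measure `μ^{⊗n}` on `Ωⁿ`. -/
def prodWeight (w : Ω → ℝ) (x : Fin n → Ω) : ℝ := ∏ i, w (x i)

/-- The operator `L_i f(x) = ∫_Ω f(x_1,…,y,…,x_n) dμ(y) − f(x)`, as a linear map. -/
noncomputable def Lcoord (w : Ω → ℝ) (i : Fin n) :
    ((Fin n → Ω) → ℝ) →ₗ[ℝ] ((Fin n → Ω) → ℝ) where
  toFun f := fun x => (∑ y, w y * f (Function.update x i y)) - f x
  map_add' f g := by
    funext x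
    simp [mul_add, Finset.sum_add_distrib]
    ring
  map_smul' c f := by
    funext x
    simp only [Pi.smul_apply, smul_eq_mul, RingHom.id_apply, mul_sub, Finset.mul_sum]
    congr 1
    exact Finset.sum_congr rfl fun y _ => by ring

/-- `L = Σ_i L_i`. -/
noncomputable def Ltot (w : Ω → ℝ) (n : ℕ) :
    ((Fin n → Ω) → ℝ) →ₗ[ℝ] ((Fin n → Ω) → ℝ) :=
  ∑ i : Fin n, Lcoord w i

/-- The semigroup `P_t = e^{tL}`. -/
noncomputable def Psemi (w : Ω → ℝ) (n : ℕ) (t : ℝ) : ((Fin n → Ω) → ℝ) → ((Fin n → Ω) → ℝ) :=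
  fun f => NormedSpace.exp (t • (LinearMap.toContinuousLinearMap (Ltot w n))) f

/-- `Π_T f` : the function obtained from `f` by integrating out the coordinates
in `T` against `μ`. -/
noncomputable def PiT (w : Ω → ℝ) (T : Finset (Fin n)) (f : (Fin n → Ω) → ℝ) :
    (Fin n → Ω) → ℝ :=
  fun x => ∑ y : { i // i ∈ T } → Ω, (∏ i : { i // i ∈ T }, w (y i)) *
    f (fun i => if h : i ∈ T then y ⟨i, h⟩ else x i)

/-- The `L¹(μ^{⊗n})` norm. -/
noncomputable def nrm1 (w : Ω → ℝ) (f : (Fin n → Ω) → ℝ) : ℝ :=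
  ∑ x, prodWeight w x * |f x|

/-- The square of the `L²(μ^{⊗n})` norm. -/
noncomputable def nrm2sq (w : Ω → ℝ) (f : (Fin n → Ω) → ℝ) : ℝ :=
  ∑ x, prodWeight w x * (f x) ^ 2

/-- The `L^p(μ^{⊗n})` norm. -/
noncomputable def nrmp (w : Ω → ℝ) (p : ℝ) (f : (Fin n → Ω) → ℝ) : ℝ :=
  (∑ x, prodWeight w x * |f x| ^ p) ^ (1 / p)

/-- The influence of coordinate `i` on `f` : `I_i(f) = ‖L_i f‖_{L¹(μ^{⊗n})}`. -/
noncomputable def influence (w : Ω → ℝ) (i : Fin n) (f : (Fin n → Ω) → ℝ) : ℝ :=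
  nrm1 w (Lcoord w i f)

/-!
Efron–Stein: the averaging operators `E_i = 1 + L_i` are commuting orthogonal projections of
`L²(μ^{⊗n})` and `Π_T` is their product over `T`, so integrating out the coordinates of `T` one
at a time gives `‖g - Π_T g‖₂² ≤ ∑_{i ∈ T} ‖L_i g‖₂²`. Take `g = P_t f`. Since `L_i` commutes
with `L`, `L_i P_t f = P_t L_i f`, and hypercontractivity with `p = 1 + e^{-2ρt}` together with
`|L_i f| ≤ 1` bounds `‖P_t L_i f‖₂²` by `‖L_i f‖_p² ≤ I_i(f)^{2/p} = I_i(f)^{1+α}`,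
where `α = (1 - e^{-2ρt}) / (1 + e^{-2ρt})`. For `i ∈ T` this is at most `I_i(f) η^α`.
-/

open Function

lemma Real.rpow_one_add_le_mul_rpow {a b α : ℝ} (ha : 0 ≤ a) (hab : a ≤ b) (hα : 0 ≤ α) :
    a ^ (1 + α) ≤ a * b ^ α := by
  rcases ha.eq_or_lt with rfl | ha
  · rw [Real.zero_rpow (by positivity), zero_mul]
  · rw [Real.rpow_add ha, Real.rpow_one]
    exact mul_le_mul_of_nonneg_left (Real.rpow_le_rpow ha.le hab hα) ha.le

lemma Finset.prod_piFinsetUnion {ι α M : Type*} [DecidableEq ι] [CommMonoid M] (f : α → M)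
    {S U : Finset ι} (h : Disjoint S U) (y : S → α) (z : U → α) :
    ∏ j, f (Equiv.piFinsetUnion (fun _ => α) h (y, z) j) = (∏ j, f (y j)) * ∏ j, f (z j) := by
  rw [← Fintype.prod_equiv (Equiv.Finset.union S U h) _ _ (fun _ => rfl), Fintype.prod_sum_type]
  congr 1
  · exact Fintype.prod_congr _ _ fun j => congrArg f (Equiv.piFinsetUnion_left _ h j.2 _)
  · exact Fintype.prod_congr _ _ fun j => congrArg f (Equiv.piFinsetUnion_right _ h j.2 _)

noncomputable def coordAvg (w : Ω → ℝ) (i : Fin n) :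
    ((Fin n → Ω) → ℝ) →ₗ[ℝ] ((Fin n → Ω) → ℝ) :=
  ∑ y, w y • LinearMap.funLeft ℝ ℝ (fun x : Fin n → Ω => update x i y)

@[simp]
lemma coordAvg_apply (w : Ω → ℝ) (i : Fin n) (g : (Fin n → Ω) → ℝ) (x : Fin n → Ω) :
    coordAvg w i g x = ∑ y, w y * g (update x i y) := by
  simp [coordAvg, LinearMap.sum_apply, Finset.sum_apply, LinearMap.funLeft_apply]

lemma Lcoord_eq_coordAvg_sub_one (w : Ω → ℝ) (i : Fin n) :
    Lcoord w i = coordAvg w i - 1 := by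
  ext g x
  simp [Lcoord]

lemma PiT_apply (w : Ω → ℝ) (T : Finset (Fin n)) (g : (Fin n → Ω) → ℝ) (x : Fin n → Ω) :
    PiT w T g x = ∑ y : T → Ω, (∏ j, w (y j)) * g (updateFinset x T y) := rfl

lemma PiT_empty (w : Ω → ℝ) (g : (Fin n → Ω) → ℝ) : PiT w ∅ g = g := by
  funext x
  simp [PiT_apply]

lemma PiT_union (w : Ω → ℝ) {S U : Finset (Fin n)} (h : Disjoint S U) (g : (Fin n → Ω) → ℝ) :
    PiT w (S ∪ U) g = PiT w S (PiT w U g) := by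
  funext x
  simp only [PiT_apply, Finset.mul_sum]
  rw [← Fintype.sum_prod_type', ← (Equiv.piFinsetUnion (fun _ => Ω) h).sum_comp]
  refine Fintype.sum_congr _ _ fun p => ?_
  rw [Finset.prod_piFinsetUnion, updateFinset_updateFinset h]
  ring

lemma PiT_singleton (w : Ω → ℝ) (i : Fin n) (g : (Fin n → Ω) → ℝ) :
    PiT w {i} g = coordAvg w i g := by
  funext x
  rw [coordAvg_apply, PiT_apply, ← (Equiv.funUnique ({i} : Finset (Fin n)) Ω).symm.sum_comp]
  simp [updateFinset_singleton]

lemma coordAvg_idem (w : Ω → ℝ) (hw1 : ∑ y, w y = 1) (i : Fin n) (g : (Fin n → Ω) → ℝ) :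
    coordAvg w i (coordAvg w i g) = coordAvg w i g := by
  funext x
  simp [update_idem, ← Finset.sum_mul, hw1]

lemma PiT_insert (w : Ω → ℝ) {i : Fin n} {S : Finset (Fin n)} (hi : i ∉ S)
    (g : (Fin n → Ω) → ℝ) : PiT w (insert i S) g = PiT w S (coordAvg w i g) := by
  rw [Finset.insert_eq, Finset.union_comm, PiT_union w (Finset.disjoint_singleton_right.2 hi),
    PiT_singleton]

lemma coordAvg_PiT_comm (w : Ω → ℝ) {i : Fin n} {S : Finset (Fin n)} (hi : i ∉ S)
    (g : (Fin n → Ω) → ℝ) : coordAvg w i (PiT w S g) = PiT w S (coordAvg w i g) := by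
  rw [← PiT_singleton, ← PiT_union w (Finset.disjoint_singleton_left.2 hi), ← Finset.insert_eq,
    PiT_insert w hi]

lemma coordAvg_commute (w : Ω → ℝ) (i j : Fin n) : Commute (coordAvg w i) (coordAvg w j) := by
  rcases eq_or_ne i j with rfl | hij
  · exact Commute.refl _
  · refine LinearMap.ext fun g => ?_
    simp only [Module.End.mul_apply]
    rw [← PiT_singleton w j, coordAvg_PiT_comm w (Finset.notMem_singleton.2 hij), PiT_singleton]

lemma Lcoord_commute_coordAvg (w : Ω → ℝ) (i j : Fin n) :
    Commute (Lcoord w i) (coordAvg w j) := by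
  rw [Lcoord_eq_coordAvg_sub_one]
  exact (coordAvg_commute w i j).sub_left (Commute.one_left _)

lemma Lcoord_commute (w : Ω → ℝ) (i j : Fin n) : Commute (Lcoord w i) (Lcoord w j) := by
  rw [Lcoord_eq_coordAvg_sub_one w j]
  exact (Lcoord_commute_coordAvg w i j).sub_right (Commute.one_right _)

lemma Lcoord_commute_Ltot (w : Ω → ℝ) (i : Fin n) : Commute (Lcoord w i) (Ltot w n) :=
  Commute.sum_right _ _ _ fun j _ => Lcoord_commute w i j

lemma Psemi_comm_of_commute (w : Ω → ℝ) (t : ℝ) {A : ((Fin n → Ω) → ℝ) →ₗ[ℝ] ((Fin n → Ω) → ℝ)}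
    (hA : Commute A (Ltot w n)) (g : (Fin n → Ω) → ℝ) :
    A (Psemi w n t g) = Psemi w n t (A g) := by
  have hc : Commute (LinearMap.toContinuousLinearMap A)
      (t • LinearMap.toContinuousLinearMap (Ltot w n)) :=
    Commute.smul_right (ContinuousLinearMap.ext fun g => LinearMap.congr_fun hA.eq g) t
  exact DFunLike.congr_fun hc.exp_right.eq g

omit [Fintype Ω] in
lemma prodWeight_nonneg {w : Ω → ℝ} (hw : ∀ y, 0 ≤ w y) (x : Fin n → Ω) : 0 ≤ prodWeight w x :=
  Finset.prod_nonneg fun j _ => hw (x j)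

omit [Fintype Ω] in
lemma prodWeight_update_mul (w : Ω → ℝ) (x : Fin n → Ω) (i : Fin n) (y : Ω) :
    prodWeight w (update x i y) * w (x i) = prodWeight w x * w y := by
  simp only [prodWeight, ← Finset.mul_prod_erase _ _ (Finset.mem_univ i), update_self]
  rw [Finset.prod_congr rfl fun j hj => by rw [update_of_ne (Finset.ne_of_mem_erase hj)]]
  ring

noncomputable def wInner (w : Ω → ℝ) : LinearMap.BilinForm ℝ ((Fin n → Ω) → ℝ) :=
  ∑ x, prodWeight w x • (LinearMap.mul ℝ ℝ).compl₁₂ (LinearMap.proj x) (LinearMap.proj x)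

@[simp]
lemma wInner_apply (w : Ω → ℝ) (u v : (Fin n → Ω) → ℝ) :
    wInner w u v = ∑ x, prodWeight w x * (u x * v x) := by
  simp [wInner, LinearMap.sum_apply]

lemma wInner_comm (w : Ω → ℝ) (u v : (Fin n → Ω) → ℝ) : wInner w u v = wInner w v u := by
  simp only [wInner_apply, mul_comm (u _)]

lemma nrm2sq_eq_wInner (w : Ω → ℝ) (g : (Fin n → Ω) → ℝ) : nrm2sq w g = wInner w g g := by
  simp only [nrm2sq, wInner_apply, sq]

lemma nrm2sq_nonneg {w : Ω → ℝ} (hw : ∀ y, 0 ≤ w y) (g : (Fin n → Ω) → ℝ) : 0 ≤ nrm2sq w g :=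
  Finset.sum_nonneg fun x _ => mul_nonneg (prodWeight_nonneg hw x) (sq_nonneg _)

lemma nrm1_nonneg {w : Ω → ℝ} (hw : ∀ y, 0 ≤ w y) (g : (Fin n → Ω) → ℝ) : 0 ≤ nrm1 w g :=
  Finset.sum_nonneg fun x _ => mul_nonneg (prodWeight_nonneg hw x) (abs_nonneg _)

lemma nrm2sq_sub_of_wInner_eq_zero (w : Ω → ℝ) {u v : (Fin n → Ω) → ℝ} (h : wInner w u v = 0) :
    nrm2sq w (v - u) = nrm2sq w v + nrm2sq w u := by
  simp only [nrm2sq_eq_wInner, map_sub, LinearMap.sub_apply, wInner_comm w v u, h]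
  ring

/-- Resampling coordinate `i` is an involution of `Ωⁿ × Ω` preserving `μ^{⊗n} ⊗ μ`. -/
lemma wInner_coordAvg_left (w : Ω → ℝ) (i : Fin n) (u v : (Fin n → Ω) → ℝ) :
    wInner w (coordAvg w i u) v = wInner w u (coordAvg w i v) := by
  have hφ : Involutive fun p : (Fin n → Ω) × Ω => (update p.1 i p.2, p.1 i) := fun p => by
    simp
  calc wInner w (coordAvg w i u) v
      = ∑ p : (Fin n → Ω) × Ω, prodWeight w p.1 * w p.2 * u (update p.1 i p.2) * v p.1 := by
        simp only [wInner_apply, coordAvg_apply, Fintype.sum_prod_type, Finset.mul_sum,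
          Finset.sum_mul]
        exact Fintype.sum_congr _ _ fun x => Fintype.sum_congr _ _ fun y => by ring
    _ = ∑ p : (Fin n → Ω) × Ω, prodWeight w p.1 * w p.2 * u p.1 * v (update p.1 i p.2) := by
        rw [← Equiv.sum_comp hφ.toPerm]
        refine Fintype.sum_congr _ _ fun p => ?_
        simp only [Involutive.coe_toPerm, update_idem, update_eq_self]
        linear_combination (u p.1 * v (update p.1 i p.2)) * prodWeight_update_mul w p.1 i p.2
    _ = wInner w u (coordAvg w i v) := by
        simp only [wInner_apply, coordAvg_apply, Fintype.sum_prod_type, Finset.mul_sum]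
        exact Fintype.sum_congr _ _ fun x => Fintype.sum_congr _ _ fun y => by ring

lemma wInner_Lcoord_eq_zero (w : Ω → ℝ) (i : Fin n) (u : (Fin n → Ω) → ℝ)
    {v : (Fin n → Ω) → ℝ} (hv : coordAvg w i v = v) : wInner w (Lcoord w i u) v = 0 := by
  rw [Lcoord_eq_coordAvg_sub_one, LinearMap.sub_apply, Module.End.one_apply, map_sub,
    LinearMap.sub_apply, wInner_coordAvg_left, hv, sub_self]

lemma nrm2sq_coordAvg_le {w : Ω → ℝ} (hw : ∀ y, 0 ≤ w y) (hw1 : ∑ y, w y = 1) (i : Fin n)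
    (g : (Fin n → Ω) → ℝ) : nrm2sq w (coordAvg w i g) ≤ nrm2sq w g := by
  have hg : g = coordAvg w i g - Lcoord w i g := by
    rw [Lcoord_eq_coordAvg_sub_one]; simp
  have := nrm2sq_sub_of_wInner_eq_zero w (wInner_Lcoord_eq_zero w i g (coordAvg_idem w hw1 i g))
  rw [← hg] at this
  linarith [nrm2sq_nonneg hw (Lcoord w i g)]

lemma nrm2sq_sub_PiT_le {w : Ω → ℝ} (hw : ∀ y, 0 ≤ w y) (hw1 : ∑ y, w y = 1)
    (T : Finset (Fin n)) (g : (Fin n → Ω) → ℝ) :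
    nrm2sq w (g - PiT w T g) ≤ ∑ i ∈ T, nrm2sq w (Lcoord w i g) := by
  induction T using Finset.induction_on generalizing g with
  | empty => simp [PiT_empty, nrm2sq]
  | @insert i S hi ih =>
    set v := coordAvg w i g - PiT w S (coordAvg w i g)
    have hv : coordAvg w i v = v := by
      rw [map_sub, coordAvg_PiT_comm w hi, coordAvg_idem w hw1]
    have hsplit : g - PiT w (insert i S) g = v - Lcoord w i g := by
      rw [PiT_insert w hi, Lcoord_eq_coordAvg_sub_one]; simp [v]
    have hv_le : nrm2sq w v ≤ ∑ j ∈ S, nrm2sq w (Lcoord w j g) := by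
      refine (ih _).trans (Finset.sum_le_sum fun j _ => ?_)
      rw [← Module.End.mul_apply, (Lcoord_commute_coordAvg w j i).eq, Module.End.mul_apply]
      exact nrm2sq_coordAvg_le hw hw1 i _
    rw [hsplit, nrm2sq_sub_of_wInner_eq_zero w (wInner_Lcoord_eq_zero w i g hv),
      Finset.sum_insert hi]
    linarith

lemma nrmp_le_nrm1_rpow {w : Ω → ℝ} (hw : ∀ y, 0 ≤ w y) {p : ℝ} (hp : 1 ≤ p)
    {h : (Fin n → Ω) → ℝ} (hh : ∀ x, |h x| ≤ 1) : nrmp w p h ≤ nrm1 w h ^ (1 / p) :=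
  Real.rpow_le_rpow
    (Finset.sum_nonneg fun x _ => mul_nonneg (prodWeight_nonneg hw x) (by positivity))
    (Finset.sum_le_sum fun x _ => mul_le_mul_of_nonneg_left
      (Real.rpow_le_self_of_le_one (abs_nonneg _) (hh x) hp) (prodWeight_nonneg hw x))
    (by positivity)

lemma nrm2sq_le_nrm1_rpow {w : Ω → ℝ} (hw : ∀ y, 0 ≤ w y) {p : ℝ} (hp : 1 ≤ p)
    {h : (Fin n → Ω) → ℝ} (hh : ∀ x, |h x| ≤ 1) {u : (Fin n → Ω) → ℝ}
    (hu : √(nrm2sq w u) ≤ nrmp w p h) : nrm2sq w u ≤ nrm1 w h ^ (2 / p) :=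
  calc nrm2sq w u = √(nrm2sq w u) ^ 2 := (Real.sq_sqrt (nrm2sq_nonneg hw u)).symm
    _ ≤ (nrm1 w h ^ (1 / p)) ^ 2 :=
      pow_le_pow_left₀ (Real.sqrt_nonneg _) (hu.trans (nrmp_le_nrm1_rpow hw hp hh)) 2
    _ = nrm1 w h ^ (2 / p) := by
      rw [← Real.rpow_natCast, ← Real.rpow_mul (nrm1_nonneg hw h)]
      ring_nf

/-- Let `Ω` be a finite set with full-support probability measure `μ`,
and assume the product semigroup `(P_t)` on `Ωⁿ` is hypercontractive with constant `ρ > 0`.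
Let `f : Ωⁿ → ℝ` satisfy `max_i ‖L_i f‖_∞ ≤ 1`, let `η > 0`, `t > 0`, and let
`T ⊆ {1,…,n}` be such that `I_i(f) ≤ η` for every `i ∈ T`. Then
`‖P_t f − Π_T P_t f‖²_{L²(μ^{⊗n})} ≤ I(f) · η^{(1−e^{−2ρt})/(1+e^{−2ρt})}`. -/
theorem stmt3
    (w : Ω → ℝ) (hwpos : ∀ x, 0 < w x) (hw1 : ∑ x, w x = 1)
    (ρ : ℝ) (hρ : 0 < ρ)
    (hhyper : ∀ s : ℝ, 0 < s → ∀ g : (Fin n → Ω) → ℝ,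
      Real.sqrt (nrm2sq w (Psemi w n s g)) ≤ nrmp w (1 + Real.exp (-2 * ρ * s)) g)
    (f : (Fin n → Ω) → ℝ) (hbdd : ∀ i : Fin n, ∀ x, |Lcoord w i f x| ≤ 1)
    (η : ℝ) (hη : 0 < η) (t : ℝ) (ht : 0 < t)
    (T : Finset (Fin n)) (hT : ∀ i ∈ T, influence w i f ≤ η) :
    nrm2sq w (fun x => Psemi w n t f x - PiT w T (Psemi w n t f) x) ≤
      (∑ i : Fin n, influence w i f) *
        η ^ ((1 - Real.exp (-2 * ρ * t)) / (1 + Real.exp (-2 * ρ * t))) := by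
  set e := Real.exp (-2 * ρ * t)
  have he0 : 0 < e := Real.exp_pos _
  have he1 : e < 1 := Real.exp_lt_one_iff.2 (by nlinarith)
  have hα : 0 ≤ (1 - e) / (1 + e) := div_nonneg (by linarith) (by linarith)
  have hexp : 2 / (1 + e) = 1 + (1 - e) / (1 + e) := by field_simp; ring
  have hw : ∀ y, 0 ≤ w y := fun y => (hwpos y).le
  have hcoord : ∀ i ∈ T,
      nrm2sq w (Lcoord w i (Psemi w n t f)) ≤ influence w i f * η ^ ((1 - e) / (1 + e)) := by
    intro i hi
    rw [Psemi_comm_of_commute w t (Lcoord_commute_Ltot w i)]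
    calc _ ≤ influence w i f ^ (2 / (1 + e)) :=
          nrm2sq_le_nrm1_rpow hw (by linarith) (hbdd i) (hhyper t ht _)
      _ ≤ _ := hexp ▸ Real.rpow_one_add_le_mul_rpow (nrm1_nonneg hw _) (hT i hi) hα
  calc _ ≤ ∑ i ∈ T, nrm2sq w (Lcoord w i (Psemi w n t f)) := nrm2sq_sub_PiT_le hw hw1 T _
    _ ≤ ∑ i ∈ T, influence w i f * η ^ ((1 - e) / (1 + e)) := Finset.sum_le_sum hcoord
    _ ≤ ∑ i, influence w i f * η ^ ((1 - e) / (1 + e)) :=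
        Finset.sum_le_sum_of_subset_of_nonneg (Finset.subset_univ T) fun i _ _ =>
          mul_nonneg (nrm1_nonneg hw _) (Real.rpow_nonneg hη.le _)
    _ = _ := (Finset.sum_mul _ _ _).symm
end

section
/- There exists a universal constant c > 0 such that: for all integers 0 < k < n, every function f on the slice ([n] choose k), and every η > 0, there exists a set S ⊆ {1,…,n} of cardinality at most c·Inf(f)/η such that I_{τ_{ij}}(f) < η whenever i ∉ S and j ∉ S. -/
open Finset

/-- The slice `([n] choose k)` of the Boolean cube: points of `{0,1}ⁿ` with exactly `k` ones. -/
abbrev Slice (n k : ℕ) : Type :=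
  { x : Fin n → Bool // (∑ l, (if x l then 1 else 0 : ℕ)) = k }

/-- The action of a permutation `σ` on the slice: `x^σ = (x_{σ(l)})_l`. -/
def permAct {n k : ℕ} (σ : Equiv.Perm (Fin n)) (x : Slice n k) : Slice n k :=
  ⟨fun l => x.1 (σ l), (Fintype.sum_equiv σ _ _ fun l => rfl).trans x.2⟩

/-- `D_{τ_{ij}} f (x) = f(x^{τ_{ij}}) − f(x)`. -/
def sliceD {n k : ℕ} (i j : Fin n) (f : Slice n k → ℝ) (x : Slice n k) : ℝ :=
  f (permAct (Equiv.swap i j) x) - f x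

/-- The `L¹` norm with respect to the uniform probability measure on the slice. -/
noncomputable def sliceL1 {n k : ℕ} (f : Slice n k → ℝ) : ℝ :=
  (Fintype.card (Slice n k) : ℝ)⁻¹ * ∑ x, |f x|

/-- The square of the `L²` norm with respect to the uniform probability measure
on the slice. -/
noncomputable def sliceL2sq {n k : ℕ} (f : Slice n k → ℝ) : ℝ :=
  (Fintype.card (Slice n k) : ℝ)⁻¹ * ∑ x, (f x) ^ 2

/-- The influence `I_{τ_{ij}}(f) = ‖D_{τ_{ij}} f‖_{L¹}`. -/
noncomputable def sliceInfluence {n k : ℕ} (i j : Fin n) (f : Slice n k → ℝ) : ℝ :=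
  sliceL1 (sliceD i j f)

/-- The total influence `Inf(f) = (1/n) Σ_{1 ≤ i < j ≤ n} I_{τ_{ij}}(f)`. -/
noncomputable def sliceTotalInfluence {n k : ℕ} (f : Slice n k → ℝ) : ℝ :=
  (n : ℝ)⁻¹ * ∑ i : Fin n, ∑ j : Fin n, if i < j then sliceInfluence i j f else 0

lemma permAct_mul {n k : ℕ} (σ τ : Equiv.Perm (Fin n)) (x : Slice n k) :
    permAct (σ * τ) x = permAct τ (permAct σ x) := Subtype.ext rfl

lemma permAct_one {n k : ℕ} (x : Slice n k) : permAct 1 x = x := Subtype.ext rfl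

def permActEquiv {n k : ℕ} (σ : Equiv.Perm (Fin n)) : Slice n k ≃ Slice n k where
  toFun := permAct σ
  invFun := permAct σ⁻¹
  left_inv x := by rw [← permAct_mul, mul_inv_cancel, permAct_one]
  right_inv x := by rw [← permAct_mul, inv_mul_cancel, permAct_one]

/-- g σ = ∑ |f(x^σ) - f(x)| -/
noncomputable def gsum {n k : ℕ} (f : Slice n k → ℝ) (σ : Equiv.Perm (Fin n)) : ℝ :=
  ∑ x, |f (permAct σ x) - f x|

lemma gsum_nonneg {n k : ℕ} (f : Slice n k → ℝ) (σ : Equiv.Perm (Fin n)) : 0 ≤ gsum f σ :=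
  Finset.sum_nonneg fun _ _ => abs_nonneg _

lemma gsum_mul_le {n k : ℕ} (f : Slice n k → ℝ) (σ τ : Equiv.Perm (Fin n)) :
    gsum f (σ * τ) ≤ gsum f σ + gsum f τ := by
  have h2 : (∑ x, |f (permAct τ (permAct σ x)) - f (permAct σ x)|) = gsum f τ :=
    Equiv.sum_comp (permActEquiv σ) (fun y => |f (permAct τ y) - f y|)
  have h1 : gsum f (σ * τ) ≤
      (∑ x, |f (permAct τ (permAct σ x)) - f (permAct σ x)|) + gsum f σ := by
    rw [gsum, gsum, ← Finset.sum_add_distrib]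
    apply Finset.sum_le_sum
    intro x _
    rw [permAct_mul]
    exact abs_sub_le _ _ _
  rw [h2] at h1
  linarith

lemma sliceInfluence_eq {n k : ℕ} (i j : Fin n) (f : Slice n k → ℝ) :
    sliceInfluence i j f = (Fintype.card (Slice n k) : ℝ)⁻¹ * gsum f (Equiv.swap i j) := rfl

lemma sliceInfluence_nonneg {n k : ℕ} (i j : Fin n) (f : Slice n k → ℝ) :
    0 ≤ sliceInfluence i j f := by
  rw [sliceInfluence_eq]
  exact mul_nonneg (by positivity) (gsum_nonneg f _)

lemma sliceInfluence_comm {n k : ℕ} (i j : Fin n) (f : Slice n k → ℝ) :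
    sliceInfluence i j f = sliceInfluence j i f := by
  rw [sliceInfluence_eq, sliceInfluence_eq, Equiv.swap_comm]

lemma sliceInfluence_self {n k : ℕ} (i : Fin n) (f : Slice n k → ℝ) :
    sliceInfluence i i f = 0 := by
  rw [sliceInfluence_eq]
  have hg : gsum f (Equiv.swap i i) = 0 := by
    rw [gsum]
    apply Finset.sum_eq_zero
    intro x _
    have hx : permAct (Equiv.swap i i) x = x := by
      rw [Equiv.swap_self]; exact Subtype.ext rfl
    rw [hx, sub_self, abs_zero]
  rw [hg, mul_zero]

/-- quasi-triangle: I(i,j) ≤ 2 I(i,l) + 2 I(l,j) for all i j l, i ≠ j. -/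
lemma sliceInfluence_tri {n k : ℕ} (i j l : Fin n) (hij : i ≠ j) (f : Slice n k → ℝ) :
    sliceInfluence i j f ≤ 2 * sliceInfluence i l f + 2 * sliceInfluence l j f := by
  by_cases hil : l = i
  · rw [hil]
    have h1 := sliceInfluence_self i f
    have h2 := sliceInfluence_nonneg i j f
    linarith
  by_cases hlj : l = j
  · rw [hlj]
    have h1 := sliceInfluence_self j f
    have h2 := sliceInfluence_nonneg i j f
    linarith
  · have key : Equiv.swap l j * Equiv.swap i l * Equiv.swap l j = Equiv.swap j i :=
      Equiv.swap_mul_swap_mul_swap (fun h => hil h.symm) hij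
    have h1 : gsum f (Equiv.swap j i) ≤ gsum f (Equiv.swap l j) + gsum f (Equiv.swap i l)
        + gsum f (Equiv.swap l j) := by
      rw [← key]
      have a1 := gsum_mul_le f (Equiv.swap l j * Equiv.swap i l) (Equiv.swap l j)
      have a2 := gsum_mul_le f (Equiv.swap l j) (Equiv.swap i l)
      linarith
    rw [sliceInfluence_comm i j, sliceInfluence_eq, sliceInfluence_eq, sliceInfluence_eq]
    have hc : (0:ℝ) ≤ (Fintype.card (Slice n k) : ℝ)⁻¹ := by positivity
    nlinarith [gsum_nonneg f (Equiv.swap i l), gsum_nonneg f (Equiv.swap l j),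
      mul_le_mul_of_nonneg_left h1 hc]

/-- There exists a universal constant `c > 0` such that: for all integers
`0 < k < n`, every function `f` on the slice `([n] choose k)`, and every `η > 0`, there
exists a set `S ⊆ {1,…,n}` of cardinality at most `c·Inf(f)/η` such that `I_{τ_{ij}}(f) < η`
whenever `i ∉ S` and `j ∉ S`. -/
theorem stmt9 :
    ∃ c : ℝ, 0 < c ∧
      ∀ n k : ℕ, 0 < k → k < n → ∀ f : Slice n k → ℝ, ∀ η : ℝ, 0 < η →
      ∃ S : Finset (Fin n), (S.card : ℝ) ≤ c * sliceTotalInfluence f / η ∧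
        ∀ i j : Fin n, i < j → i ∉ S → j ∉ S → sliceInfluence i j f < η := by
  refine ⟨16, by norm_num, ?_⟩
  intro n k hk hkn f η hη
  have hn0 : 0 < n := hk.trans hkn
  have hn : (0:ℝ) < (n : ℝ) := by exact_mod_cast hn0
  set d : Fin n → Fin n → ℝ := fun i j => sliceInfluence i j f with hd
  set R : Fin n → ℝ := fun i => ∑ j, d i j with hR
  set T : ℝ := ∑ i : Fin n, ∑ j : Fin n, if i < j then sliceInfluence i j f else 0 with hT
  have hTI : sliceTotalInfluence f = (n : ℝ)⁻¹ * T := rfl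
  -- total sum identity: ∑ i, R i = 2 * T
  have hsum : ∑ i, R i = 2 * T := by
    have step : ∀ i j : Fin n, d i j =
        (if i < j then sliceInfluence i j f else 0) +
        (if j < i then sliceInfluence j i f else 0) := by
      intro i j
      rcases lt_trichotomy i j with h | h | h
      · simp [hd, h, not_lt_of_gt h]
      · simp [hd, h, sliceInfluence_self]
      · simp [hd, h, not_lt_of_gt h, sliceInfluence_comm i j]
    calc ∑ i, R i
        = ∑ i, ∑ j, ((if i < j then sliceInfluence i j f else 0) +
            (if j < i then sliceInfluence j i f else 0)) := by
          simp only [hR]; exact Finset.sum_congr rfl fun i _ =>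
            Finset.sum_congr rfl fun j _ => step i j
      _ = T + ∑ i : Fin n, ∑ j : Fin n, (if j < i then sliceInfluence j i f else 0) := by
          simp [Finset.sum_add_distrib, hT]
      _ = T + T := by rw [Finset.sum_comm (f := fun i j => if j < i then sliceInfluence j i f else 0)]
      _ = 2 * T := by ring
  have hRnonneg : ∀ i, 0 ≤ R i := fun i =>
    Finset.sum_nonneg fun j _ => sliceInfluence_nonneg i j f
  have hTnonneg : 0 ≤ T := by
    have := Finset.sum_nonneg (fun i (_ : i ∈ Finset.univ) => hRnonneg i)
    linarith [hsum]
  set S : Finset (Fin n) := Finset.univ.filter (fun i => (n:ℝ) * η / 8 ≤ R i) with hS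
  refine ⟨S, ?_, ?_⟩
  · -- card bound
    have h1 : (S.card : ℝ) * ((n:ℝ) * η / 8) ≤ ∑ i ∈ S, R i := by
      calc (S.card : ℝ) * ((n:ℝ) * η / 8) = ∑ _i ∈ S, (n:ℝ) * η / 8 := by
            rw [Finset.sum_const, nsmul_eq_mul]
        _ ≤ ∑ i ∈ S, R i := Finset.sum_le_sum fun i hi => (Finset.mem_filter.mp hi).2
    have h2 : ∑ i ∈ S, R i ≤ ∑ i, R i :=
      Finset.sum_le_sum_of_subset_of_nonneg (Finset.subset_univ S)
        (fun i _ _ => hRnonneg i)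
    have h3 : (S.card : ℝ) * ((n:ℝ) * η / 8) ≤ 2 * T := by linarith [hsum ▸ h2]
    rw [hTI]
    have key2 : (S.card : ℝ) * η * n ≤ 16 * T := by nlinarith
    have e : 16 * ((n:ℝ)⁻¹ * T) / η = 16 * T / ((n:ℝ) * η) := by
      field_simp
    rw [e, le_div_iff₀ (by positivity)]
    nlinarith
  · intro i j hij hiS hjS
    have hi : R i < (n:ℝ) * η / 8 := by
      by_contra h
      exact hiS (Finset.mem_filter.mpr ⟨Finset.mem_univ i, not_lt.mp h⟩)
    have hj : R j < (n:ℝ) * η / 8 := by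
      by_contra h
      exact hjS (Finset.mem_filter.mpr ⟨Finset.mem_univ j, not_lt.mp h⟩)
    have key : (n : ℝ) * d i j ≤ 2 * R i + 2 * R j := by
      have pt : ∀ l : Fin n, d i j ≤ 2 * d i l + 2 * d j l := by
        intro l
        have := sliceInfluence_tri i j l (ne_of_lt hij) f
        rw [hd]
        simp only
        rw [sliceInfluence_comm j l]
        exact this
      calc (n : ℝ) * d i j = ∑ _l : Fin n, d i j := by
            rw [Finset.sum_const, Finset.card_univ, Fintype.card_fin, nsmul_eq_mul]
        _ ≤ ∑ l, (2 * d i l + 2 * d j l) := Finset.sum_le_sum fun l _ => pt l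
        _ = 2 * R i + 2 * R j := by
            rw [Finset.sum_add_distrib, ← Finset.mul_sum, ← Finset.mul_sum]
    have : (n:ℝ) * d i j < (n:ℝ) * η := by
      calc (n:ℝ) * d i j ≤ 2 * R i + 2 * R j := key
        _ < 2 * ((n:ℝ) * η / 8) + 2 * ((n:ℝ) * η / 8) := by linarith
        _ ≤ (n:ℝ) * η := by nlinarith
    exact lt_of_mul_lt_mul_left this hn.le
end
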